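/- arXiv:1003.5964 — 2 statements merged into one kernel-verified Lean document; each statement's English description precedes it below -/
import Mathlib

section
/- Let T and T̃ be phylogenetic trees on the same leaf set that differ by a single SPR move of a subtree S, and suppose some edge f* of a reference tree T* is good for T but bad for T̃. Then the edge f of T realizing the partition R(T*,f*) is not contained in the pruned subtree S. -/
open SimpleGraph Finset

variable {V : Type*}

/-- `C` separates `R1` from `R2` in `T`. -/
def Separates (T : SimpleGraph V) (C : Set (Sym2 V)) (R1 R2 : Set V) : Prop :=
  ∀ a ∈ R1, ∀ b ∈ R2, ¬ (T.deleteEdges C).Reachable a b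

/-- Minimum size of an edge cut of `T` separating `R1` from `R2`. -/
noncomputable def cutSize (T : SimpleGraph V) (R1 R2 : Set V) : ℕ :=
  sInf {n | ∃ C : Finset (Sym2 V), (C : Set (Sym2 V)) ⊆ T.edgeSet ∧ C.card = n ∧
    Separates T (C : Set (Sym2 V)) R1 R2}

/-- `C` realizes in `T` the leaf partition of `L` induced by deleting `estar` from `Tstar`. -/
def RealizesCut (Tstar : SimpleGraph V) (estar : Sym2 V) (L : Set V)
    (T : SimpleGraph V) (C : Set (Sym2 V)) : Prop :=
  ∀ a ∈ L, ∀ b ∈ L, ¬ (Tstar.deleteEdges {estar}).Reachable a b →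
    ¬ (T.deleteEdges C).Reachable a b

/-- `cut_{R(Tstar,estar)}(T)`: min number of edges of `T` realizing the partition of the
leaf set `L` induced by the edge `estar` of `Tstar`. -/
noncomputable def cutR (Tstar : SimpleGraph V) (estar : Sym2 V) (L : Set V)
    (T : SimpleGraph V) : ℕ :=
  sInf {n | ∃ C : Finset (Sym2 V), (C : Set (Sym2 V)) ⊆ T.edgeSet ∧ C.card = n ∧
    RealizesCut Tstar estar L T (C : Set (Sym2 V))}

/-- The part of the leaf set `L` on the side of `w` after deleting edge `e` of `T`. -/
def sideOf (T : SimpleGraph V) (L : Set V) (e : Sym2 V) (w : V) : Set V :=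
  {l ∈ L | (T.deleteEdges {e}).Reachable w l}

/-- The (unordered) bipartition of the leaf set `L` induced by edge `e` of `T`. -/
def splitOf (T : SimpleGraph V) (L : Set V) (e : Sym2 V) : Set (Set V) :=
  {S | ∃ w ∈ e, S = sideOf T L e w}

/-- Edge `estar` of `Tstar` is good for `T`: some single edge of `T` realizes the same
leaf bipartition. -/
def GoodEdge (Tstar T : SimpleGraph V) (L : Set V) (estar : Sym2 V) : Prop :=
  ∃ e ∈ T.edgeSet, splitOf T L e = splitOf Tstar L estar

/-- The set of edges of `Tstar` which are bad for `T`. -/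
def BadEdges (Tstar T : SimpleGraph V) (L : Set V) : Set (Sym2 V) :=
  {e ∈ Tstar.edgeSet | ¬ GoodEdge Tstar T L e}

/-- A leaf is a vertex of degree 1. -/
def IsLeaf (T : SimpleGraph V) (v : V) : Prop := (T.neighborSet v).ncard = 1

/-- A phylogenetic tree with leaf set `L`: a tree whose leaves are exactly `L` and whose
internal vertices have degree 3. -/
def IsPhylo (T : SimpleGraph V) (L : Set V) : Prop :=
  T.IsTree ∧ (∀ v, v ∈ L ↔ IsLeaf T v) ∧ ∀ v, v ∉ L → (T.neighborSet v).ncard = 3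

/-- The weighted cut function `A(T) = Σ_{e ∈ E(T*)} α*_e · cut_{R(T*,e)}(T)`. -/
noncomputable def Aval (Tstar : SimpleGraph V) [Fintype Tstar.edgeSet]
    (α : Sym2 V → ℝ) (L : Set V) (T : SimpleGraph V) : ℝ :=
  ∑ e ∈ Tstar.edgeFinset, α e * (cutR Tstar e L T : ℝ)
/-- The result of pruning the subtree hanging (via `v`) off the edge `{u,v}` and regrafting
it on the edge `{x,y}`: remove the edges from `v` to its other neighbors `a, b`, add the
edge `{a,b}` (smoothing `v` away), then subdivide the edge `{x,y}` by `v`. -/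
def sprApply (T : SimpleGraph V) (v a b x y : V) : SimpleGraph V :=
  SimpleGraph.fromEdgeSet
    ((((T.edgeSet \ {s(v,a), s(v,b)}) ∪ {s(a,b)}) \ {s(x,y)}) ∪ {s(v,x), s(v,y)})

/-- Validity of the SPR data: `{u,v}` is an edge of `T`, `a, b` are the other two neighbors
of the attachment vertex `v`, and `{x,y}` is an edge of the tree remaining after pruning the
subtree `S` containing `u` (in particular `x, y` lie outside of `S`). -/
def sprValid (T : SimpleGraph V) (u v a b x y : V) : Prop :=
  T.Adj u v ∧ T.Adj v a ∧ T.Adj v b ∧ a ≠ b ∧ a ≠ u ∧ b ≠ u ∧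
  x ≠ y ∧ x ≠ v ∧ y ≠ v ∧
  (s(x,y) ∈ T.edgeSet ∪ {s(a,b)}) ∧
  ¬ (T.deleteEdges {s(u,v)}).Reachable u x ∧ ¬ (T.deleteEdges {s(u,v)}).Reachable u y

/-- `NS T u v`: the trees obtainable from `T` by pruning the subtree `S` hanging off the
edge `{u,v}` on the side of `u` and regrafting it on some edge of the remaining tree. -/
def NS (T : SimpleGraph V) (u v : V) : Set (SimpleGraph V) :=
  {T' | ∃ a b x y, sprValid T u v a b x y ∧ T' = sprApply T v a b x y}

/-- `T'` is obtained from `T` by a single SPR move. -/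
def SPRStep (T T' : SimpleGraph V) : Prop := ∃ u v, T' ∈ NS T u v


/-! If `f` lies in the pruned subtree `S`, then every edge that the SPR move deletes or creates
has both endpoints outside `S`, and in each of `T - f` and `T̃ - f` all vertices outside `S` lie
in the component of the attachment vertex `v`. Hence `T - f` and `T̃ - f` have the same
components, so `f` is also an edge of `T̃` inducing the same leaf split, and `f*` would be good
for `T̃`. -/

theorem Sym2.mk_ne_mk_of_mem_of_notMem {s : Set V} {c d e₁ e₂ : V} (hc : c ∈ s)
    (h₁ : e₁ ∉ s) (h₂ : e₂ ∉ s) : s(c, d) ≠ s(e₁, e₂) := by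
  intro h
  rcases Sym2.eq_iff.mp h with ⟨rfl, -⟩ | ⟨rfl, -⟩ <;> contradiction

namespace SimpleGraph

variable {G H : SimpleGraph V}

theorem Reachable.of_forall_adj_reachable (h : ∀ c d, G.Adj c d → H.Reachable c d)
    {z₁ z₂ : V} (hz : G.Reachable z₁ z₂) : H.Reachable z₁ z₂ := by
  simp only [reachable_iff_reflTransGen] at h hz ⊢
  exact Relation.reflTransGen_closed h _ _ hz

theorem Reachable.of_forall_adj_of_reachable {u z : V}
    (h : ∀ c d, G.Reachable u c → H.Reachable u c → G.Adj c d → H.Adj c d)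
    (hz : G.Reachable u z) : H.Reachable u z := by
  rw [reachable_iff_reflTransGen] at hz
  induction hz with
  | refl => rfl
  | tail huc hcd ih =>
    exact ih.trans (h _ _ ((reachable_iff_reflTransGen _ _).mpr huc) ih hcd).reachable

theorem reachable_iff_of_adj_iff_of_notMem (O : Set V) (v : V)
    (hGH : ∀ c d, c ∉ O → (G.Adj c d ↔ H.Adj c d))
    (hG : ∀ z ∈ O, G.Reachable v z) (hH : ∀ z ∈ O, H.Reachable v z) (z₁ z₂ : V) :
    G.Reachable z₁ z₂ ↔ H.Reachable z₁ z₂ := by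
  have transfer : ∀ {G H : SimpleGraph V}, (∀ c d, c ∉ O → G.Adj c d → H.Adj c d) →
      (∀ z ∈ O, H.Reachable v z) → ∀ {z₁ z₂}, G.Reachable z₁ z₂ → H.Reachable z₁ z₂ := by
    intro G H hGH hH z₁ z₂
    refine Reachable.of_forall_adj_reachable fun c d hcd => ?_
    by_cases hc : c ∈ O
    · by_cases hd : d ∈ O
      · exact (hH c hc).symm.trans (hH d hd)
      · exact (hGH d c hd hcd.symm).reachable.symm
    · exact (hGH c d hc hcd).reachable
  exact ⟨transfer (fun c d hc => (hGH c d hc).mp) hH,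
    transfer (fun c d hc => (hGH c d hc).mpr) hG⟩

theorem Reachable.deleteEdges_or {u v z : V} (hz : G.Reachable u z) :
    (G.deleteEdges {s(u, v)}).Reachable u z ∨ (G.deleteEdges {s(u, v)}).Reachable v z := by
  rw [reachable_iff_reflTransGen] at hz
  induction hz with
  | refl => exact .inl .rfl
  | @tail c d _ hcd ih =>
    by_cases he : s(c, d) = s(u, v)
    · rcases Sym2.eq_iff.mp he with ⟨rfl, rfl⟩ | ⟨rfl, rfl⟩
      · exact .inr .rfl
      · exact .inl .rfl
    · have hcd' : (G.deleteEdges {s(u, v)}).Adj c d := deleteEdges_adj.mpr ⟨hcd, he⟩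
      exact ih.imp (·.trans hcd'.reachable) (·.trans hcd'.reachable)

theorem Reachable.deleteEdges_of_not_reachable {z₁ z₂ p q : V} (hz : G.Reachable z₁ z₂)
    (hp : ¬ G.Reachable z₁ p) : (G.deleteEdges {s(p, q)}).Reachable z₁ z₂ := by
  classical
  obtain ⟨w⟩ := hz
  by_cases he : s(p, q) ∈ w.edges
  · exact absurd ⟨w.takeUntil p (w.fst_mem_support_of_mem_edges he)⟩ hp
  · exact ⟨w.toDeleteEdges _ fun e hew => by rintro rfl; exact he hew⟩

theorem not_reachable_deleteEdges_of_adj {s : Set (Sym2 V)} {u v w : V} (hvw : G.Adj v w)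
    (hs : s(v, w) ∉ s) (hv : ¬ (G.deleteEdges s).Reachable u v) :
    ¬ (G.deleteEdges s).Reachable u w :=
  fun hw => hv (hw.trans (deleteEdges_adj.mpr ⟨hvw.symm, by rwa [Sym2.eq_swap]⟩).reachable)

end SimpleGraph

/-- The vertex set of the pruned subtree `S`. -/
def hangingSubtree (T : SimpleGraph V) (u v : V) : Set V :=
  {z | (T.deleteEdges {s(u, v)}).Reachable u z}

theorem reachable_deleteEdges_of_notMem_hangingSubtree {G : SimpleGraph V} {u v p q z : V}
    (hG : G.Connected) (hv : v ∉ hangingSubtree G u v) (hp : p ∈ hangingSubtree G u v)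
    (hz : z ∉ hangingSubtree G u v) : (G.deleteEdges {s(p, q)}).Reachable v z := by
  have hvz : (G.deleteEdges {s(u, v)}).Reachable v z :=
    ((hG.preconnected u z).deleteEdges_or).resolve_left hz
  have hvp : ¬ (G.deleteEdges {s(u, v)}).Reachable v p := fun h => hv (hp.trans h.symm)
  exact (hvz.deleteEdges_of_not_reachable hvp).mono
    (by rw [deleteEdges_deleteEdges]; exact deleteEdges_anti Set.subset_union_right)

theorem sprApply_adj_of_adj {T : SimpleGraph V} {v a b x y c d : V} (h : T.Adj c d)
    (hva : s(c, d) ≠ s(v, a)) (hvb : s(c, d) ≠ s(v, b)) (hxy : s(c, d) ≠ s(x, y)) :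
    (sprApply T v a b x y).Adj c d := by
  rw [sprApply, fromEdgeSet_adj]
  exact ⟨Or.inl ⟨Or.inl ⟨h, by simp [hva, hvb]⟩, hxy⟩, h.ne⟩

theorem adj_of_sprApply_adj {T : SimpleGraph V} {v a b x y c d : V}
    (h : (sprApply T v a b x y).Adj c d) :
    T.Adj c d ∨ s(c, d) = s(a, b) ∨ s(c, d) = s(v, x) ∨ s(c, d) = s(v, y) := by
  rw [sprApply, fromEdgeSet_adj] at h
  simp only [Set.mem_union, Set.mem_sdiff, Set.mem_insert_iff, Set.mem_singleton_iff,
    mem_edgeSet] at h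
  tauto

namespace sprValid

variable {T : SimpleGraph V} {u v a b x y : V}

theorem notMem_hangingSubtree (hT : T.IsAcyclic) (hval : sprValid T u v a b x y) :
    v ∉ hangingSubtree T u v ∧ a ∉ hangingSubtree T u v ∧ b ∉ hangingSubtree T u v ∧
      x ∉ hangingSubtree T u v ∧ y ∉ hangingSubtree T u v := by
  obtain ⟨huv, hva, hvb, -, hau, hbu, -, -, -, -, hx, hy⟩ := hval
  have hv : v ∉ hangingSubtree T u v := isAcyclic_iff_forall_adj_isBridge.mp hT huv
  have hvS : ∀ w, T.Adj v w → w ≠ u → w ∉ hangingSubtree T u v := fun w hvw hwu =>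
    not_reachable_deleteEdges_of_adj hvw (by simp [hwu, huv.ne']) hv
  exact ⟨hv, hvS a hva hau, hvS b hvb hbu, hx, hy⟩

theorem sprApply_adj_iff (hT : T.IsAcyclic) (hval : sprValid T u v a b x y) {c d : V}
    (hc : c ∈ hangingSubtree T u v) : (sprApply T v a b x y).Adj c d ↔ T.Adj c d := by
  obtain ⟨hv, ha, hb, hx, hy⟩ := hval.notMem_hangingSubtree hT
  refine ⟨fun h => ?_, fun h => sprApply_adj_of_adj h
    (Sym2.mk_ne_mk_of_mem_of_notMem hc hv ha) (Sym2.mk_ne_mk_of_mem_of_notMem hc hv hb)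
    (Sym2.mk_ne_mk_of_mem_of_notMem hc hx hy)⟩
  rcases adj_of_sprApply_adj h with h | h | h | h
  · exact h
  · exact absurd h (Sym2.mk_ne_mk_of_mem_of_notMem hc ha hb)
  · exact absurd h (Sym2.mk_ne_mk_of_mem_of_notMem hc hv hx)
  · exact absurd h (Sym2.mk_ne_mk_of_mem_of_notMem hc hv hy)

theorem hangingSubtree_sprApply (hT : T.IsAcyclic) (hval : sprValid T u v a b x y) :
    hangingSubtree (sprApply T v a b x y) u v = hangingSubtree T u v := by
  have hdel : ∀ c d, c ∈ hangingSubtree T u v →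
      (((sprApply T v a b x y).deleteEdges {s(u, v)}).Adj c d ↔
        (T.deleteEdges {s(u, v)}).Adj c d) := by
    intro c d hc
    simp only [deleteEdges_adj, hval.sprApply_adj_iff hT hc]
  ext z
  exact ⟨Reachable.of_forall_adj_of_reachable fun c d _ hc => (hdel c d hc).mp,
    Reachable.of_forall_adj_of_reachable fun c d hc _ => (hdel c d hc).mpr⟩

theorem reachable_deleteEdges_sprApply_iff (hT : T.IsTree)
    (hTt : (sprApply T v a b x y).Connected) (hval : sprValid T u v a b x y) {p q : V}
    (hp : p ∈ hangingSubtree T u v) (z₁ z₂ : V) :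
    (T.deleteEdges {s(p, q)}).Reachable z₁ z₂ ↔
      ((sprApply T v a b x y).deleteEdges {s(p, q)}).Reachable z₁ z₂ := by
  have hv := (hval.notMem_hangingSubtree hT.isAcyclic).1
  have hS := hval.hangingSubtree_sprApply hT.isAcyclic
  refine reachable_iff_of_adj_iff_of_notMem (hangingSubtree T u v)ᶜ v
    (fun c d hc => ?_) (fun z hz => ?_) (fun z hz => ?_) z₁ z₂
  · simp only [deleteEdges_adj, hval.sprApply_adj_iff hT.isAcyclic (Set.notMem_compl_iff.mp hc)]
  · exact reachable_deleteEdges_of_notMem_hangingSubtree hT.connected hv hp hz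
  · rw [← hS] at hv hp hz
    exact reachable_deleteEdges_of_notMem_hangingSubtree hTt hv hp hz

end sprValid

theorem splitOf_congr {G H : SimpleGraph V} {L : Set V} {e : Sym2 V}
    (h : ∀ z₁ z₂, (G.deleteEdges {e}).Reachable z₁ z₂ ↔ (H.deleteEdges {e}).Reachable z₁ z₂) :
    splitOf G L e = splitOf H L e := by
  simp only [splitOf, sideOf, h]

theorem stmt5_general (Tstar T Ttil : SimpleGraph V) (L : Set V)
    (hT : IsPhylo T L) (hTt : IsPhylo Ttil L)
    (u v : V) (hmove : Ttil ∈ NS T u v)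
    (fstar : Sym2 V)
    (hbad : ¬ GoodEdge Tstar Ttil L fstar)
    (f : Sym2 V) (hfT : f ∈ T.edgeSet) (hreal : splitOf T L f = splitOf Tstar L fstar) :
    ¬ ∀ z ∈ f, (T.deleteEdges {s(u,v)}).Reachable u z := by
  obtain ⟨a, b, x, y, hval, rfl⟩ := hmove
  induction f using Sym2.ind with
  | _ p q =>
  intro hpq
  have hp : p ∈ hangingSubtree T u v := hpq p (Sym2.mem_mk_left p q)
  refine hbad ⟨s(p, q), (hval.sprApply_adj_iff hT.1.isAcyclic hp).mpr hfT, ?_⟩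
  rw [← hreal]
  exact splitOf_congr fun z₁ z₂ =>
    (hval.reachable_deleteEdges_sprApply_iff hT.1 hTt.1.connected hp z₁ z₂).symm

/-- if `T` and `Ttil` differ by an SPR move of the subtree hanging off `{u,v}`
(on the `u` side), and an edge `fstar` of `Tstar` is good for `T` but bad for `Ttil`, then
any edge `f` of `T` realizing the partition `R(Tstar, fstar)` is not contained in the pruned
subtree `S`. -/
theorem stmt5 [Fintype V] (Tstar T Ttil : SimpleGraph V) (L : Set V)
    (hTs : IsPhylo Tstar L) (hT : IsPhylo T L) (hTt : IsPhylo Ttil L)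
    (u v : V) (hmove : Ttil ∈ NS T u v)
    (fstar : Sym2 V) (hf : fstar ∈ Tstar.edgeSet)
    (hgood : GoodEdge Tstar T L fstar) (hbad : ¬ GoodEdge Tstar Ttil L fstar)
    (f : Sym2 V) (hfT : f ∈ T.edgeSet) (hreal : splitOf T L f = splitOf Tstar L fstar) :
    ¬ ∀ z ∈ f, (T.deleteEdges {s(u,v)}).Reachable u z :=
  stmt5_general Tstar T Ttil L hT hTt u v hmove fstar hbad f hfT hreal
end

section
/- Let T* be a bad-edge witness setup: suppose f* is an edge of T* in BAD_{T*}(T) closest to the leaves, separating a subtree S* of T* (the smaller side, containing at most half the vertices) from the rest. Then S* contains at least two leaves. -/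
open SimpleGraph Finset

variable {V : Type*}

/-- The vertex set of the component of `w` after deleting edge `e` from `T`. -/
def compSet (T : SimpleGraph V) (e : Sym2 V) (w : V) : Set V :=
  {z | (T.deleteEdges {e}).Reachable w z}

/-- The distance of an edge `e` of `T` to the leaves: the number of vertices in the smaller
of the two components of `T − e`. -/
noncomputable def edgeDist (T : SimpleGraph V) (e : Sym2 V) : ℕ :=
  sInf {n | ∃ w ∈ e, n = (compSet T e w).ncard}

/-!
An edge of `T*` at a leaf `p` splits the leaves into `{p}` and the rest, and so does the unique
edge of `T` at `p`; hence a bad edge `s(p,q)` has `p` internal, of degree three. The two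
neighbours of `p` other than `q` each start a maximal path in `T* − pq`, which ends at a leaf of
`T*` on the side of `p`; the two leaves differ because paths in a forest are unique.
-/

namespace SimpleGraph

variable {G : SimpleGraph V}

theorem neighborSet_deleteEdges_singleton_of_notMem {e : Sym2 V} {v : V} (hv : v ∉ e) :
    (G.deleteEdges {e}).neighborSet v = G.neighborSet v := by
  ext w
  simp only [mem_neighborSet, deleteEdges_adj, Set.mem_singleton_iff, and_iff_left_iff_imp]
  rintro - rfl
  exact hv (Sym2.mem_mk_left v w)

theorem Walk.IsPath.exists_append_forall_adj_mem_support [Fintype V] {u v : V}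
    {P : G.Walk u v} (hP : P.IsPath) :
    ∃ (w : V) (Q : G.Walk v w), (P.append Q).IsPath ∧
      ∀ x, G.Adj w x → x ∈ (P.append Q).support := by
  by_cases hmax : ∀ x, G.Adj v x → x ∈ P.support
  · exact ⟨v, .nil, by simpa using hP, by simpa using hmax⟩
  · push Not at hmax
    obtain ⟨x, hx, hxP⟩ := hmax
    have hP' : (P.concat hx).IsPath := hP.concat hxP hx
    obtain ⟨w, Q, hQ, hQmax⟩ := exists_append_forall_adj_mem_support hP'
    rw [Walk.concat_append] at hQ hQmax
    exact ⟨w, .cons hx Q, hQ, hQmax⟩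
termination_by Fintype.card V - P.length
decreasing_by
  have := hP'.length_lt
  rw [Walk.length_concat] at this ⊢
  omega

theorem IsAcyclic.exists_isPath_cons_ncard_neighborSet_eq_one [Fintype V] (hG : G.IsAcyclic)
    {u v : V} (h : G.Adj u v) :
    ∃ (w : V) (Q : G.Walk v w), (Walk.cons h Q).IsPath ∧ (G.neighborSet w).ncard = 1 := by
  obtain ⟨w, Q, hQ, hmax⟩ := (Walk.IsPath.of_adj h).exists_append_forall_adj_mem_support
  rw [Walk.cons_nil_append] at hQ hmax
  refine ⟨w, Q, hQ, Set.ncard_eq_one.mpr ⟨(Walk.cons h Q).penultimate, ?_⟩⟩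
  ext x
  refine ⟨fun hx ↦ hG.eq_penultimate_of_adj_end hQ hx (hmax x hx), ?_⟩
  rintro rfl
  exact (Walk.adj_penultimate Walk.not_nil_cons).symm

end SimpleGraph

section LeafEdge

variable {G : SimpleGraph V} {L : Set V} {p r : V}

theorem reachable_deleteEdges_iff_eq_of_neighborSet_eq_singleton
    (hN : G.neighborSet p = {r}) {z : V} :
    (G.deleteEdges {s(p,r)}).Reachable p z ↔ z = p := by
  refine ⟨fun ⟨P⟩ ↦ ?_, fun h ↦ h ▸ .rfl⟩
  cases P with
  | nil => rfl
  | cons hadj _ =>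
    rw [deleteEdges_adj] at hadj
    have hr : _ ∈ G.neighborSet p := hadj.1
    rw [hN, Set.mem_singleton_iff] at hr
    exact absurd (by rw [hr]; rfl) hadj.2

theorem reachable_deleteEdges_of_neighborSet_eq_singleton (hG : G.Preconnected)
    (hN : G.neighborSet p = {r}) {a b : V} (ha : a ≠ p) (hb : b ≠ p) :
    (G.deleteEdges {s(p,r)}).Reachable a b := by
  obtain ⟨P, hP⟩ := hG.exists_isPath a b
  refine reachable_deleteEdges_iff_exists_walk.mpr ⟨P, fun he ↦ ?_⟩
  refine hP.isTrail.not_mem_support_of_subsingleton_neighborSet ha.symm hb.symm ?_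
    (P.fst_mem_support_of_mem_edges he)
  rw [hN]
  exact Set.subsingleton_singleton

theorem splitOf_eq_of_neighborSet_eq_singleton (hG : G.Preconnected) (hp : p ∈ L)
    (hN : G.neighborSet p = {r}) : splitOf G L s(p,r) = {{p}, L \ {p}} := by
  have hpr : r ≠ p := (show G.Adj p r from show r ∈ G.neighborSet p by simp [hN]).ne'
  have side_p : sideOf G L s(p,r) p = {p} := by
    ext l
    simp only [sideOf, Set.mem_ofPred_eq, Set.mem_singleton_iff,
      reachable_deleteEdges_iff_eq_of_neighborSet_eq_singleton hN]
    exact ⟨And.right, fun h ↦ ⟨h ▸ hp, h⟩⟩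
  have side_r : sideOf G L s(p,r) r = L \ {p} := by
    ext l
    simp only [sideOf, Set.mem_ofPred_eq, Set.mem_sdiff, Set.mem_singleton_iff]
    refine and_congr_right fun _ ↦ ⟨fun h hl ↦ hpr ?_, fun hl ↦ ?_⟩
    · exact (reachable_deleteEdges_iff_eq_of_neighborSet_eq_singleton hN).mp (hl ▸ h.symm)
    · exact reachable_deleteEdges_of_neighborSet_eq_singleton hG hN hpr hl
  ext S
  simp only [splitOf, Sym2.mem_iff, Set.mem_ofPred_eq, Set.mem_insert_iff,
    Set.mem_singleton_iff]
  constructor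
  · rintro ⟨w, rfl | rfl, rfl⟩
    exacts [.inl side_p, .inr side_r]
  · rintro (rfl | rfl)
    exacts [⟨p, .inl rfl, side_p.symm⟩, ⟨r, .inr rfl, side_r.symm⟩]

end LeafEdge

section Phylo

variable {T : SimpleGraph V} {L : Set V} {p q : V}

theorem IsPhylo.exists_neighborSet_eq_singleton (hT : IsPhylo T L) (hp : p ∈ L) :
    ∃ r, T.neighborSet p = {r} :=
  Set.ncard_eq_one.mp ((hT.2.1 p).mp hp)

theorem IsPhylo.goodEdge_of_mem {Tstar : SimpleGraph V} (hTs : IsPhylo Tstar L)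
    (hT : IsPhylo T L) (hpq : Tstar.Adj p q) (hp : p ∈ L) : GoodEdge Tstar T L s(p,q) := by
  obtain ⟨r, hr⟩ := hT.exists_neighborSet_eq_singleton hp
  obtain ⟨q', hq'⟩ := hTs.exists_neighborSet_eq_singleton hp
  obtain rfl : q = q' := by simpa [hq'] using (show q ∈ Tstar.neighborSet p from hpq)
  refine ⟨s(p,r), (show r ∈ T.neighborSet p by simp [hr]), ?_⟩
  rw [splitOf_eq_of_neighborSet_eq_singleton hT.1.connected.preconnected hp hr,
    splitOf_eq_of_neighborSet_eq_singleton hTs.1.connected.preconnected hp hq']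

theorem IsPhylo.exists_mem_isPath_cons_deleteEdges [Fintype V] (hT : IsPhylo T L)
    (hpq : T.Adj p q) {z : V} (hz : (T.deleteEdges {s(p,q)}).Adj p z) :
    ∃ l ∈ L, ∃ Q : (T.deleteEdges {s(p,q)}).Walk z l, (Walk.cons hz Q).IsPath := by
  have hG : (T.deleteEdges {s(p,q)}).IsAcyclic := hT.1.isAcyclic.anti (deleteEdges_le _)
  obtain ⟨l, Q, hQ, hl⟩ := hG.exists_isPath_cons_ncard_neighborSet_eq_one hz
  refine ⟨l, (hT.2.1 l).mpr ?_, Q, hQ⟩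
  have hlp : l ≠ p := by
    rintro rfl
    exact ((Walk.cons_isPath_iff _ _).mp hQ).2 Q.end_mem_support
  have hlq : l ≠ q := by
    rintro rfl
    exact isBridge_iff.mp (isAcyclic_iff_forall_adj_isBridge.mp hT.1.isAcyclic hpq)
      (Walk.cons hz Q).reachable
  rwa [IsLeaf, ← neighborSet_deleteEdges_singleton_of_notMem (e := s(p,q)) (by simp [hlp, hlq])]

theorem IsPhylo.two_le_ncard_inter_compSet_of_notMem [Fintype V] (hT : IsPhylo T L)
    (hpq : T.Adj p q) (hp : p ∉ L) : 2 ≤ (L ∩ compSet T s(p,q) p).ncard := by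
  set G := T.deleteEdges {s(p,q)}
  have hG : G.IsAcyclic := hT.1.isAcyclic.anti (deleteEdges_le _)
  have hdeg : (T.neighborSet p \ {q}).ncard = 2 := by
    rw [Set.ncard_sdiff_singleton_of_mem (show q ∈ T.neighborSet p from hpq), hT.2.2 p hp]
  obtain ⟨x, y, ⟨hx, hxq⟩, ⟨hy, hyq⟩, hxy⟩ :=
    (Set.one_lt_ncard_iff (Set.toFinite _)).mp (by omega : 1 < (T.neighborSet p \ {q}).ncard)
  have hGadj : ∀ {z}, T.Adj p z → z ∉ ({q} : Set V) → G.Adj p z := fun hz hzq ↦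
    (deleteEdges_adj ..).mpr ⟨hz, fun h ↦ hzq (Sym2.congr_right.mp h)⟩
  have hpx : G.Adj p x := hGadj hx hxq
  have hpy : G.Adj p y := hGadj hy hyq
  obtain ⟨l₁, hl₁, Q₁, hQ₁⟩ := hT.exists_mem_isPath_cons_deleteEdges hpq hpx
  obtain ⟨l₂, hl₂, Q₂, hQ₂⟩ := hT.exists_mem_isPath_cons_deleteEdges hpq hpy
  have hl : l₁ ≠ l₂ := by
    rintro rfl
    have := (hG.subsingleton_path p l₁).elim ⟨_, hQ₁⟩ ⟨_, hQ₂⟩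
    exact hxy (by simpa using congrArg (fun P : G.Path p l₁ ↦ P.val.snd) this)
  calc 2 = ({l₁, l₂} : Set V).ncard := (Set.ncard_pair hl).symm
    _ ≤ (L ∩ compSet T s(p,q) p).ncard := by
      refine Set.ncard_le_ncard ?_ (Set.toFinite _)
      rintro l (rfl | rfl)
      exacts [⟨hl₁, (Walk.cons hpx Q₁).reachable⟩, ⟨hl₂, (Walk.cons hpy Q₂).reachable⟩]

end Phylo

theorem stmt10_general [Fintype V] (Tstar T : SimpleGraph V) (L : Set V)
    (hTs : IsPhylo Tstar L) (hT : IsPhylo T L)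
    (p q : V) (hbad : s(p,q) ∈ BadEdges Tstar T L) :
    2 ≤ (L ∩ compSet Tstar s(p,q) p).ncard := by
  have hpq : Tstar.Adj p q := hbad.1
  by_cases hp : p ∈ L
  · exact absurd (hTs.goodEdge_of_mem hT hpq hp) hbad.2
  · exact hTs.two_le_ncard_inter_compSet_of_notMem hpq hp

/-- if `fstar = s(p,q)` is a bad edge of `Tstar` for `T` closest to the leaves,
with `p` on the smaller side `S*`, then `S*` contains at least two leaves. -/
theorem stmt10 [Fintype V] (Tstar T : SimpleGraph V) (L : Set V)
    (hTs : IsPhylo Tstar L) (hT : IsPhylo T L)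
    (p q : V) (hbad : s(p,q) ∈ BadEdges Tstar T L)
    (hsmall : (compSet Tstar s(p,q) p).ncard ≤ (compSet Tstar s(p,q) q).ncard)
    (hclosest : ∀ g ∈ BadEdges Tstar T L, edgeDist Tstar s(p,q) ≤ edgeDist Tstar g) :
    2 ≤ (L ∩ compSet Tstar s(p,q) p).ncard :=
  stmt10_general Tstar T L hTs hT p q hbad
end
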